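/- arXiv:1207.6409 — 2 statements merged into one kernel-verified Lean document; each statement's English description precedes it below -/
import Mathlib

section
/- In the uniform case, if λ* > 0, then there exist an order-preserving covering placement y with maximum movement λ* and indices i ≤ j such that sensors i, i+1, …, j are in attached positions in y (y_{t+1} = y_t + 2r for i ≤ t ≤ j−1) and one of the following three cases holds: (a) y_j = x_j − λ* and y_i = r; (b) y_i = x_i + λ* and y_j = L − r; (c) i < j, y_i = x_i + λ*, and y_j = x_j − λ*. -/
/-!
Placements within movement `c` of `x` form a compact set on which covering is a closed condition,
so `λ*` is attained. Maximising `∑ t * y t` over the optimal placements gives an order-preserving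
one: swapping an inversion of a sorted `x` increases that sum and does not increase any movement
beyond `λ*`.

Among order-preserving optimal placements take one with the fewest sensors moved by exactly `λ*`.
If some sensor is moved left by `λ*`, let `k` be the last one and `i, …, k` the maximal attached
block ending at `k`. Unless the block contains a sensor moved right by `λ*` (case (c)) or starts
at `r` (case (a)), the whole block can be pushed slightly to the right without losing coverage or
order, which lowers that number. Otherwise some sensor is moved right by `λ*`, and the mirror image
`t ↦ n + 1 - t`, `p ↦ L - p` turns this into the first situation, giving (b) or (c).
-/

/-- Uniform case: placement `y` of sensors `1, …, n`, all with range `r`, covers `[0, L]`. -/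
def Covers (n : ℕ) (L r : ℝ) (y : ℕ → ℝ) : Prop :=
  Set.Icc (0 : ℝ) L ⊆ ⋃ i ∈ Set.Icc 1 n, Set.Icc (y i - r) (y i + r)

/-- The maximum movement `max_{1 ≤ i ≤ n} |x i - y i|` of the placement `y`. -/
noncomputable def MaxMove (n : ℕ) (x y : ℕ → ℝ) : ℝ :=
  sSup ((fun i => |x i - y i|) '' Set.Icc 1 n)

/-- `λ*`: the infimum of the maximum movement over all covering placements. -/
noncomputable def LamStar (n : ℕ) (L r : ℝ) (x : ℕ → ℝ) : ℝ :=
  sInf (MaxMove n x '' {y : ℕ → ℝ | Covers n L r y})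

open Filter Topology

def Feasible (n : ℕ) (L r lam : ℝ) (x y : ℕ → ℝ) : Prop :=
  Covers n L r y ∧ MonotoneOn y (Set.Icc 1 n) ∧ ∀ t ∈ Set.Icc 1 n, |x t - y t| ≤ lam

noncomputable def stretchedCount (n : ℕ) (lam : ℝ) (x y : ℕ → ℝ) : ℕ :=
  ((Finset.Icc 1 n).filter fun t => |x t - y t| = lam).card

def Attached (r : ℝ) (y : ℕ → ℝ) (i j : ℕ) : Prop :=
  ∀ t, i ≤ t → t < j → y (t + 1) = y t + 2 * r

def blockShift (y : ℕ → ℝ) (i k : ℕ) (e : ℝ) (t : ℕ) : ℝ :=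
  if t ∈ Set.Icc i k then y t + e else y t

section MaxMove

variable {n : ℕ} {x y : ℕ → ℝ}

lemma maxMove_eq_sup' (hn : 1 ≤ n) :
    MaxMove n x y = (Finset.Icc 1 n).sup' (Finset.nonempty_Icc.2 hn) fun t => |x t - y t| := by
  rw [Finset.sup'_eq_csSup_image, Finset.coe_Icc]
  rfl

lemma abs_sub_le_maxMove {t : ℕ} (ht : t ∈ Set.Icc 1 n) : |x t - y t| ≤ MaxMove n x y := by
  rw [maxMove_eq_sup' (ht.1.trans ht.2)]
  exact Finset.le_sup' (fun t => |x t - y t|) (Finset.mem_Icc.2 ht)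

lemma maxMove_le_iff (hn : 1 ≤ n) {c : ℝ} :
    MaxMove n x y ≤ c ↔ ∀ t ∈ Set.Icc 1 n, |x t - y t| ≤ c := by
  simp [maxMove_eq_sup' hn]

lemma exists_abs_sub_eq_maxMove (hn : 1 ≤ n) : ∃ t ∈ Set.Icc 1 n, |x t - y t| = MaxMove n x y := by
  obtain ⟨t, ht, h⟩ := Finset.exists_mem_eq_sup' (Finset.nonempty_Icc.2 hn) fun t => |x t - y t|
  exact ⟨t, Finset.mem_Icc.1 ht, by rw [maxMove_eq_sup' hn, h]⟩

lemma continuous_maxMove (hn : 1 ≤ n) : Continuous (MaxMove n x) := by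
  simp_rw [funext fun y => maxMove_eq_sup' (x := x) (y := y) hn]
  exact Continuous.finset_sup'_apply _ fun t _ => (continuous_const.sub (continuous_apply t)).abs

lemma maxMove_piecewise : MaxMove n x ((Set.Icc 1 n).piecewise y x) = MaxMove n x y := by
  unfold MaxMove
  congr 1
  exact Set.image_congr fun t ht => by rw [Set.piecewise_eq_of_mem _ _ _ ht]

end MaxMove

section Covers

variable {n : ℕ} {L r : ℝ} {y z : ℕ → ℝ}

lemma Covers.of_image_subset (hy : Covers n L r y) (h : y '' Set.Icc 1 n ⊆ z '' Set.Icc 1 n) :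
    Covers n L r z := by
  intro p hp
  obtain ⟨t, ht, hpt⟩ := Set.mem_iUnion₂.1 (hy hp)
  obtain ⟨s, hs, hst⟩ := h ⟨t, ht, rfl⟩
  exact Set.mem_iUnion₂.2 ⟨s, hs, hst ▸ hpt⟩

lemma isClosed_setOf_covers : IsClosed {y : ℕ → ℝ | Covers n L r y} := by
  have : {y : ℕ → ℝ | Covers n L r y} =
      ⋂ p ∈ Set.Icc 0 L, ⋃ t ∈ Set.Icc 1 n, (fun y : ℕ → ℝ => y t) ⁻¹' Set.Icc (p - r) (p + r) := by
    ext y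
    simp only [Covers, Set.subset_def, Set.mem_iUnion₂, Set.mem_ofPred_eq, Set.mem_iInter₂,
      Set.mem_preimage, Set.mem_Icc]
    refine forall₂_congr fun p _ => exists₂_congr fun t _ => ?_
    constructor <;> rintro ⟨h₁, h₂⟩ <;> constructor <;> linarith
  rw [this]
  exact isClosed_biInter fun p _ => (Set.finite_Icc 1 n).isClosed_biUnion fun t _ =>
    isClosed_Icc.preimage (continuous_apply t)

end Covers

lemma isCompact_setOf_abs_sub_le (x : ℕ → ℝ) (c : ℝ) :
    IsCompact {y : ℕ → ℝ | ∀ t, |x t - y t| ≤ c} := by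
  have : {y : ℕ → ℝ | ∀ t, |x t - y t| ≤ c} = Set.univ.pi fun t => Metric.closedBall (x t) c := by
    ext y
    simp [Real.dist_eq, abs_sub_comm]
  rw [this]
  exact isCompact_univ_pi fun t => isCompact_closedBall _ _

lemma abs_sub_le_of_swap {a b c d lam : ℝ} (hab : a ≤ b) (hdc : d ≤ c) (hac : |a - c| ≤ lam)
    (hbd : |b - d| ≤ lam) : |a - d| ≤ lam ∧ |b - c| ≤ lam := by
  simp only [abs_le] at *
  constructor <;> constructor <;> linarith

lemma sum_mul_comp_swap {s : Finset ℕ} {a b : ℕ} (ha : a ∈ s) (hb : b ∈ s) (hab : a ≠ b)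
    (y : ℕ → ℝ) : ∑ t ∈ s, (t : ℝ) * (y ∘ Equiv.swap a b) t =
      ∑ t ∈ s, (t : ℝ) * y t + (b - a) * (y a - y b) := by
  rw [← sub_eq_iff_eq_add', ← Finset.sum_sub_distrib, Finset.sum_eq_add_of_mem a b ha hb hab]
  · simp only [Function.comp_apply, Equiv.swap_apply_left, Equiv.swap_apply_right]
    ring
  · intro t _ ht
    simp [Equiv.swap_apply_of_ne_of_ne ht.1 ht.2]

section Optimum

variable {n : ℕ} {L r : ℝ} {x : ℕ → ℝ}

lemma maxMove_nonneg {y : ℕ → ℝ} : 0 ≤ MaxMove n x y :=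
  Real.sSup_nonneg (by rintro _ ⟨t, -, rfl⟩; exact abs_nonneg _)

lemma lamStar_le_maxMove {y : ℕ → ℝ} (hy : Covers n L r y) : LamStar n L r x ≤ MaxMove n x y :=
  csInf_le ⟨0, by rintro _ ⟨z, -, rfl⟩; exact maxMove_nonneg⟩ ⟨y, hy, rfl⟩

lemma Covers.exists_forall_abs_sub_le_maxMove {y : ℕ → ℝ} (hy : Covers n L r y) :
    ∃ z, Covers n L r z ∧ MaxMove n x z = MaxMove n x y ∧ ∀ t, |x t - z t| ≤ MaxMove n x y := by
  refine ⟨(Set.Icc 1 n).piecewise y x,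
    hy.of_image_subset (Set.piecewise_eqOn _ _ _).symm.image_eq.le, maxMove_piecewise, fun t => ?_⟩
  by_cases ht : t ∈ Set.Icc 1 n
  · rw [Set.piecewise_eq_of_mem _ _ _ ht]
    exact abs_sub_le_maxMove ht
  · rw [Set.piecewise_eq_of_notMem _ _ _ ht, sub_self, abs_zero]
    exact maxMove_nonneg

lemma exists_covers_maxMove_eq_lamStar (hn : 1 ≤ n) (hne : ∃ y, Covers n L r y) :
    ∃ y, Covers n L r y ∧ MaxMove n x y = LamStar n L r x := by
  obtain ⟨y₀, hy₀⟩ := hne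
  set M := MaxMove n x y₀
  set K := {y : ℕ → ℝ | Covers n L r y} ∩ {y | ∀ t, |x t - y t| ≤ M}
  have hK : ∀ y, Covers n L r y → MaxMove n x y ≤ M → ∃ z ∈ K, MaxMove n x z = MaxMove n x y := by
    intro y hy hle
    obtain ⟨z, hz, hzy, hzt⟩ := hy.exists_forall_abs_sub_le_maxMove (x := x)
    exact ⟨z, ⟨hz, fun t => (hzt t).trans hle⟩, hzy⟩
  obtain ⟨z₀, hz₀K, -⟩ := hK y₀ hy₀ le_rfl
  obtain ⟨y, hyK, hmin⟩ := ((isCompact_setOf_abs_sub_le x M).inter_left isClosed_setOf_covers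
    ).exists_isMinOn ⟨z₀, hz₀K⟩ (continuous_maxMove hn).continuousOn
  refine ⟨y, hyK.1, le_antisymm (le_csInf ⟨_, y₀, hy₀, rfl⟩ ?_) (lamStar_le_maxMove hyK.1)⟩
  rintro _ ⟨z, hz, rfl⟩
  rcases le_total (MaxMove n x z) M with h | h
  · obtain ⟨z', hz'K, hz'⟩ := hK z hz h
    exact hz' ▸ hmin hz'K
  · exact ((hmin hz₀K).trans ((maxMove_le_iff hn).2 fun t _ => hz₀K.2 t)).trans h

lemma exists_feasible_lamStar (hn : 1 ≤ n) (hx : MonotoneOn x (Set.Icc 1 n))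
    (hne : ∃ y, Covers n L r y) : ∃ y, Feasible n L r (LamStar n L r x) x y := by
  obtain ⟨y₁, hy₁, hy₁opt⟩ := exists_covers_maxMove_eq_lamStar (x := x) hn hne
  obtain ⟨z₁, hz₁, -, hz₁t⟩ := hy₁.exists_forall_abs_sub_le_maxMove (x := x)
  rw [hy₁opt] at hz₁t
  set lam := LamStar n L r x
  set K := {y : ℕ → ℝ | Covers n L r y} ∩ {y | ∀ t, |x t - y t| ≤ lam}
  obtain ⟨y, hyK, hmax⟩ := ((isCompact_setOf_abs_sub_le x lam).inter_left isClosed_setOf_covers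
    ).exists_isMaxOn (f := fun y : ℕ → ℝ => ∑ t ∈ Finset.Icc 1 n, (t : ℝ) * y t) ⟨z₁, hz₁, hz₁t⟩
    (continuous_finsetSum _ fun t _ => continuous_const.mul (continuous_apply t)).continuousOn
  refine ⟨y, hyK.1, fun a ha b hb hab => ?_, fun t _ => hyK.2 t⟩
  refine not_lt.1 fun hlt => ?_
  have hne : a ≠ b := by rintro rfl; exact lt_irrefl _ hlt
  have hswap : y ∘ Equiv.swap a b ∈ K := by
    refine ⟨hyK.1.of_image_subset ?_, fun t => ?_⟩
    · rintro _ ⟨t, ht, rfl⟩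
      refine ⟨Equiv.swap a b t, ?_, by simp⟩
      rw [Equiv.swap_apply_def]
      split_ifs <;> assumption
    · obtain ⟨hxa, hxb⟩ := abs_sub_le_of_swap (hx ha hb hab) hlt.le (hyK.2 a) (hyK.2 b)
      rw [Function.comp_apply, Equiv.swap_apply_def]
      split_ifs with h₁ h₂
      · exact h₁ ▸ hxa
      · exact h₂ ▸ hxb
      · exact hyK.2 t
  have hgain : (0 : ℝ) < (b - a) * (y a - y b) :=
    mul_pos (sub_pos.2 (Nat.cast_lt.2 (lt_of_le_of_ne hab hne))) (sub_pos.2 hlt)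
  have := hmax hswap
  simp only [Set.mem_ofPred_eq,
    sum_mul_comp_swap (Finset.mem_Icc.2 ha) (Finset.mem_Icc.2 hb) hne] at this
  linarith

end Optimum

section Placement

variable {n : ℕ} {L r : ℝ} {y : ℕ → ℝ}

lemma Covers.apply_one_le (hy : Covers n L r y) (hmono : MonotoneOn y (Set.Icc 1 n))
    (hL : 0 ≤ L) : y 1 ≤ r := by
  obtain ⟨t, ht, hpt⟩ := Set.mem_iUnion₂.1 (hy ⟨le_rfl, hL⟩)
  have := hmono ⟨le_rfl, ht.1.trans ht.2⟩ ht ht.1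
  linarith [hpt.1]

lemma Covers.le_or_le_of_gap (hy : Covers n L r y) (hmono : MonotoneOn y (Set.Icc 1 n))
    (hL : 0 < L) {t : ℕ} (ht : 1 ≤ t) (htn : t + 1 ≤ n) (hgap : y t + 2 * r < y (t + 1)) :
    y (t + 1) ≤ r ∨ L ≤ y t + r := by
  by_contra! h
  obtain ⟨q, hq₁, hq₂⟩ := exists_between
    (max_lt (lt_min (by linarith) h.2) (lt_min (by linarith) hL) :
      max (y t + r) 0 < min (y (t + 1) - r) L)
  rw [max_lt_iff] at hq₁
  rw [lt_min_iff] at hq₂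
  obtain ⟨s, hs, hqs⟩ := Set.mem_iUnion₂.1 (hy ⟨hq₁.2.le, hq₂.2.le⟩)
  rcases le_or_gt s t with hst | hst
  · have := hmono hs ⟨ht, by omega⟩ hst
    linarith [hqs.2]
  · have := hmono ⟨by omega, htn⟩ hs hst
    linarith [hqs.1]

lemma exists_maximal_attached (r : ℝ) (y : ℕ → ℝ) {k : ℕ} (hk : 1 ≤ k) :
    ∃ i, 1 ≤ i ∧ i ≤ k ∧ Attached r y i k ∧ (i = 1 ∨ y i ≠ y (i - 1) + 2 * r) := by
  induction k, hk using Nat.le_induction with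
  | base => exact ⟨1, le_rfl, le_rfl, fun t h₁ h₂ => by omega, Or.inl rfl⟩
  | succ k hk ih =>
    by_cases h : y (k + 1) = y k + 2 * r
    · obtain ⟨i, hi, hik, hatt, hbreak⟩ := ih
      refine ⟨i, hi, hik.trans k.le_succ, fun t hit htk => ?_, hbreak⟩
      rcases (Nat.lt_succ_iff.1 htk).lt_or_eq with htk | rfl
      · exact hatt t hit htk
      · exact h
    · exact ⟨k + 1, by omega, le_rfl, fun t h₁ h₂ => by omega, Or.inr (by simpa using h)⟩

lemma Covers.left_room (hy : Covers n L r y) (hmono : MonotoneOn y (Set.Icc 1 n)) (hL : 0 < L)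
    {i : ℕ} (hi : 1 ≤ i) (hin : i ≤ n) (hbreak : i = 1 ∨ y i ≠ y (i - 1) + 2 * r) (hir : y i ≠ r) :
    y i < r ∨ 2 ≤ i ∧ (y i < y (i - 1) + 2 * r ∨ L ≤ y (i - 1) + r) := by
  obtain rfl | hi₂ := eq_or_ne i 1
  · exact Or.inl ((hy.apply_one_le hmono hL.le).lt_of_ne hir)
  obtain ⟨m, rfl⟩ : ∃ m, i = m + 1 := ⟨i - 1, by omega⟩
  simp only [Nat.add_sub_cancel] at hbreak ⊢
  rcases lt_trichotomy (y (m + 1)) (y m + 2 * r) with h | h | h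
  · exact Or.inr ⟨by omega, Or.inl h⟩
  · exact absurd h (hbreak.resolve_left hi₂)
  · rcases hy.le_or_le_of_gap hmono hL (by omega) hin h with h' | h'
    · exact Or.inl (h'.lt_of_ne hir)
    · exact Or.inr ⟨by omega, Or.inr h'⟩

variable {i k : ℕ} {e : ℝ}

lemma covers_blockShift (hy : Covers n L r y) (hmono : MonotoneOn y (Set.Icc 1 n)) (hi : 1 ≤ i)
    (hatt : Attached r y i k) (he : 0 ≤ e) (he₂ : e ≤ 2 * r)
    (hleft : y i + e ≤ r ∨ 2 ≤ i ∧ (y i + e ≤ y (i - 1) + 2 * r ∨ L ≤ y (i - 1) + r)) :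
    Covers n L r (blockShift y i k e) := by
  intro p hp
  obtain ⟨t, ⟨ht₁, htn⟩, hpt⟩ := Set.mem_iUnion₂.1 (hy hp)
  refine Set.mem_iUnion₂.2 ?_
  by_cases hblk : t ∈ Set.Icc i k
  swap
  · exact ⟨t, ⟨ht₁, htn⟩, by rwa [blockShift, if_neg hblk]⟩
  obtain ⟨hit, htk⟩ := hblk
  have hyt : blockShift y i k e t = y t + e := if_pos ⟨hit, htk⟩
  rcases le_or_gt (y t + e - r) p with hp' | hp'
  · exact ⟨t, ⟨ht₁, htn⟩, by rw [hyt]; constructor <;> linarith [hpt.2]⟩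
  by_cases hit' : i < t
  · -- sensor `t - 1` is moved as well, and its interval now reaches `y t - r + e`
    obtain ⟨s, rfl⟩ : ∃ s, t = s + 1 := ⟨t - 1, by omega⟩
    have := hatt s (by omega) (by omega)
    refine ⟨s, ⟨by omega, by omega⟩, ?_⟩
    rw [blockShift, if_pos ⟨by omega, by omega⟩]
    constructor <;> linarith [hpt.1]
  obtain rfl : t = i := by omega
  rcases hleft with h | ⟨h₂, hleft⟩
  · exact ⟨t, ⟨ht₁, htn⟩, by rw [hyt]; constructor <;> linarith [hp.1, hpt.2]⟩
  have hprev : blockShift y t k e (t - 1) = y (t - 1) := if_neg fun h => by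
    obtain ⟨h, -⟩ := h
    omega
  have hmono' : y (t - 1) ≤ y t := hmono ⟨by omega, by omega⟩ ⟨ht₁, htn⟩ (by omega)
  refine ⟨t - 1, ⟨by omega, by omega⟩, ?_⟩
  rw [hprev]
  rcases hleft with h | h
  · constructor <;> linarith [hpt.1]
  · constructor <;> linarith [hpt.1, hp.2]

lemma monotoneOn_blockShift (hmono : MonotoneOn y (Set.Icc 1 n)) (he : 0 ≤ e) (hkn : k ≤ n)
    (hright : k < n → y k + e ≤ y (k + 1)) : MonotoneOn (blockShift y i k e) (Set.Icc 1 n) := by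
  rintro a ⟨ha₁, han⟩ b ⟨hb₁, hbn⟩ hab
  have hyab := hmono ⟨ha₁, han⟩ ⟨hb₁, hbn⟩ hab
  simp only [blockShift, Set.mem_Icc]
  split_ifs with hai hbi hbi
  · linarith
  · have hkb : k < b := by omega
    have hak := hmono ⟨ha₁, han⟩ ⟨by omega, hkn⟩ hai.2
    have hkb' := hmono ⟨by omega, by omega⟩ ⟨hb₁, hbn⟩ hkb
    linarith [hright (by omega)]
  · linarith
  · exact hyab

end Placement

section Stretched

variable {n : ℕ} {L r lam : ℝ} {x y : ℕ → ℝ}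

lemma stretchedCount_lt {z : ℕ → ℝ}
    (hsub : ∀ t ∈ Set.Icc 1 n, |x t - z t| = lam → |x t - y t| = lam) {k : ℕ}
    (hk : k ∈ Set.Icc 1 n) (hyk : |x k - y k| = lam) (hzk : |x k - z k| ≠ lam) :
    stretchedCount n lam x z < stretchedCount n lam x y := by
  refine Finset.card_lt_card ((Finset.ssubset_iff_of_subset fun t ht => ?_).2 ⟨k, ?_, ?_⟩)
  · rw [Finset.mem_filter, Finset.mem_Icc] at ht ⊢
    exact ⟨ht.1, hsub t ht.1 ht.2⟩
  · exact Finset.mem_filter.2 ⟨Finset.mem_Icc.2 hk, hyk⟩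
  · exact fun h => hzk (Finset.mem_filter.1 h).2

lemma Feasible.exists_stretchedCount_lt (hr : 0 < r) (hlam : 0 < lam)
    (hy : Feasible n L r lam x y) {i k : ℕ} (hi : 1 ≤ i) (hik : i ≤ k) (hkn : k ≤ n)
    (hatt : Attached r y i k) (hyk : y k = x k - lam) (hslack : ∀ t ∈ Set.Icc i k, y t < x t + lam)
    (hright : k < n → y k < y (k + 1))
    (hleft : y i < r ∨ 2 ≤ i ∧ (y i < y (i - 1) + 2 * r ∨ L ≤ y (i - 1) + r)) :
    ∃ z, Feasible n L r lam x z ∧ stretchedCount n lam x z < stretchedCount n lam x y := by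
  obtain ⟨hcov, hmono, hmove⟩ := hy
  have small : ∀ c : ℝ, 0 < c → ∀ᶠ e in 𝓝[>] (0 : ℝ), e < c := fun c hc =>
    (eventually_lt_nhds hc).filter_mono nhdsWithin_le_nhds
  have hright' : ∀ᶠ e in 𝓝[>] (0 : ℝ), k < n → y k + e ≤ y (k + 1) := by
    by_cases hk : k < n
    · exact (small _ (sub_pos.2 (hright hk))).mono fun e he _ => by linarith
    · exact Eventually.of_forall fun e h => absurd h hk
  have hleft' : ∀ᶠ e in 𝓝[>] (0 : ℝ),
      y i + e ≤ r ∨ 2 ≤ i ∧ (y i + e ≤ y (i - 1) + 2 * r ∨ L ≤ y (i - 1) + r) := by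
    rcases hleft with h | ⟨h₂, h | h⟩
    · exact (small _ (sub_pos.2 h)).mono fun e he => Or.inl (by linarith)
    · exact (small _ (sub_pos.2 h)).mono fun e he => Or.inr ⟨h₂, Or.inl (by linarith)⟩
    · exact Eventually.of_forall fun e => Or.inr ⟨h₂, Or.inr h⟩
  obtain ⟨e, ⟨he, he₂⟩, heslack, heright, heleft⟩ :=
    ((eventually_mem_nhdsWithin.and (small _ (by linarith : (0 : ℝ) < 2 * r))).and
      (((Set.finite_Icc i k).eventually_all.2 fun t ht =>
        small _ (sub_pos.2 (hslack t ht))).and (hright'.and hleft'))).exists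
  have he : 0 < e := he
  have hin : ∀ t ∈ Set.Icc i k, |x t - (y t + e)| < lam := fun t ht => by
    have := (abs_le.1 (hmove t ⟨hi.trans ht.1, ht.2.trans hkn⟩)).2
    exact abs_sub_lt_iff.2 ⟨by linarith, by linarith [heslack t ht]⟩
  refine ⟨blockShift y i k e, ⟨covers_blockShift hcov hmono hi hatt he.le he₂.le heleft,
    monotoneOn_blockShift hmono he.le hkn heright, fun t ht => ?_⟩,
    stretchedCount_lt (fun t ht h => ?_) ⟨hi.trans hik, hkn⟩ ?_ ?_⟩
  · unfold blockShift
    split_ifs with hblk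
    · exact (hin t hblk).le
    · exact hmove t ht
  · unfold blockShift at h
    split_ifs at h with hblk
    · exact absurd h (hin t hblk).ne
    · exact h
  · rw [hyk, sub_sub_cancel, abs_of_pos hlam]
  · rw [blockShift, if_pos ⟨hik, le_rfl⟩]
    exact (hin k ⟨hik, le_rfl⟩).ne

end Stretched

section Reflection

def IsReflection (n : ℕ) (L : ℝ) (u v : ℕ → ℝ) : Prop :=
  ∀ t ∈ Set.Icc 1 n, v t = L - u (n + 1 - t)

variable {n : ℕ} {L r lam : ℝ} {u v x x' y y' : ℕ → ℝ}

lemma rev_mem_Icc {t : ℕ} (ht : t ∈ Set.Icc 1 n) : n + 1 - t ∈ Set.Icc 1 n := by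
  obtain ⟨h₁, h₂⟩ := ht
  exact ⟨by omega, by omega⟩

lemma rev_rev {t : ℕ} (ht : t ∈ Set.Icc 1 n) : n + 1 - (n + 1 - t) = t := by
  obtain ⟨h₁, h₂⟩ := ht
  omega

lemma IsReflection.apply_rev (h : IsReflection n L u v) {t : ℕ} (ht : t ∈ Set.Icc 1 n) :
    v (n + 1 - t) = L - u t := by
  rw [h _ (rev_mem_Icc ht), rev_rev ht]

lemma IsReflection.symm (h : IsReflection n L u v) : IsReflection n L v u := fun t ht => by
  rw [h.apply_rev ht]
  ring

lemma IsReflection.abs_sub (hx : IsReflection n L x x') (hy : IsReflection n L y y') {t : ℕ}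
    (ht : t ∈ Set.Icc 1 n) : |x' t - y' t| = |x (n + 1 - t) - y (n + 1 - t)| := by
  rw [hx t ht, hy t ht, ← abs_neg]
  ring_nf

lemma IsReflection.covers (h : IsReflection n L y y') (hy : Covers n L r y) : Covers n L r y' := by
  intro p hp
  have hp' : L - p ∈ Set.Icc 0 L := ⟨by linarith [hp.2], by linarith [hp.1]⟩
  obtain ⟨t, ht, hpt⟩ := Set.mem_iUnion₂.1 (hy hp')
  refine Set.mem_iUnion₂.2 ⟨n + 1 - t, rev_mem_Icc ht, ?_⟩
  rw [h.apply_rev ht]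
  constructor <;> linarith [hpt.1, hpt.2]

lemma IsReflection.monotoneOn (h : IsReflection n L u v) (hu : MonotoneOn u (Set.Icc 1 n)) :
    MonotoneOn v (Set.Icc 1 n) := by
  intro a ha b hb hab
  rw [h a ha, h b hb]
  have : n + 1 - b ≤ n + 1 - a := by omega
  linarith [hu (rev_mem_Icc hb) (rev_mem_Icc ha) this]

lemma IsReflection.feasible (hx : IsReflection n L x x') (hy : IsReflection n L y y')
    (h : Feasible n L r lam x y) : Feasible n L r lam x' y' :=
  ⟨hy.covers h.1, hy.monotoneOn h.2.1, fun t ht => by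
    rw [hx.abs_sub hy ht]
    exact h.2.2 _ (rev_mem_Icc ht)⟩

lemma IsReflection.stretchedCount_eq (hx : IsReflection n L x x') (hy : IsReflection n L y y') :
    stretchedCount n lam x' y' = stretchedCount n lam x y := by
  refine Finset.card_nbij' (fun t => n + 1 - t) (fun t => n + 1 - t) ?_ ?_ ?_ ?_
  · intro t ht
    simp only [Finset.coe_filter, Finset.mem_Icc, Set.mem_ofPred_eq] at ht ⊢
    exact ⟨rev_mem_Icc ht.1, by rw [← hx.abs_sub hy ht.1, ht.2]⟩
  · intro t ht
    simp only [Finset.coe_filter, Finset.mem_Icc, Set.mem_ofPred_eq] at ht ⊢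
    exact ⟨rev_mem_Icc ht.1, by rw [hx.abs_sub hy (rev_mem_Icc ht.1), rev_rev ht.1, ht.2]⟩
  · intro t ht
    simp only [Finset.coe_filter, Finset.mem_Icc, Set.mem_ofPred_eq] at ht
    exact rev_rev ht.1
  · intro t ht
    simp only [Finset.coe_filter, Finset.mem_Icc, Set.mem_ofPred_eq] at ht
    exact rev_rev ht.1

lemma IsReflection.attached (h : IsReflection n L y y') {i j : ℕ} (hi : 1 ≤ i) (hjn : j ≤ n)
    (hatt : Attached r y' i j) : Attached r y (n + 1 - j) (n + 1 - i) := by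
  intro t ht₁ ht₂
  have := hatt (n - t) (by omega) (by omega)
  rw [h.symm t ⟨by omega, by omega⟩, h.symm (t + 1) ⟨by omega, by omega⟩,
    show n + 1 - (t + 1) = n - t by omega, show n + 1 - t = n - t + 1 by omega, this]
  ring

end Reflection

section Extremal

variable {n : ℕ} {L r lam : ℝ} {x y : ℕ → ℝ}

lemma Feasible.exists_attached_of_stretched_left (hL : 0 < L) (hr : 0 < r) (hlam : 0 < lam)
    (hx : MonotoneOn x (Set.Icc 1 n)) (hy : Feasible n L r lam x y)
    (hmin : ∀ z, Feasible n L r lam x z → stretchedCount n lam x y ≤ stretchedCount n lam x z)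
    {k₀ : ℕ} (hk₀ : k₀ ∈ Set.Icc 1 n) (hyk₀ : y k₀ = x k₀ - lam) :
    ∃ i j, 1 ≤ i ∧ i ≤ j ∧ j ≤ n ∧ Attached r y i j ∧
      ((y j = x j - lam ∧ y i = r) ∨ (i < j ∧ y i = x i + lam ∧ y j = x j - lam)) := by
  obtain ⟨k, hkS, hkmax⟩ := ((Finset.Icc 1 n).filter fun t => y t = x t - lam).exists_max_image id
    ⟨k₀, Finset.mem_filter.2 ⟨Finset.mem_Icc.2 hk₀, hyk₀⟩⟩
  rw [Finset.mem_filter, Finset.mem_Icc] at hkS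
  obtain ⟨⟨hk₁, hkn⟩, hyk⟩ := hkS
  obtain ⟨i, hi, hik, hatt, hbreak⟩ := exists_maximal_attached r y hk₁
  by_cases hc : ∃ t ∈ Set.Ico i k, y t = x t + lam
  · obtain ⟨t, ⟨hit, htk⟩, hyt⟩ := hc
    exact ⟨t, k, hi.trans hit, htk.le, hkn, fun s hs hsk => hatt s (hit.trans hs) hsk,
      Or.inr ⟨htk, hyt, hyk⟩⟩
  by_cases hir : y i = r
  · exact ⟨i, k, hi, hik, hkn, hatt, Or.inl ⟨hyk, hir⟩⟩
  exfalso
  have hslack : ∀ t ∈ Set.Icc i k, y t < x t + lam := by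
    rintro t ⟨hit, htk⟩
    rcases htk.lt_or_eq with htk | rfl
    · exact lt_of_le_of_ne (by linarith [(abs_le.1 (hy.2.2 t ⟨hi.trans hit, htk.le.trans hkn⟩)).1])
        fun h => hc ⟨t, ⟨hit, htk⟩, h⟩
    · linarith
  have hright : k < n → y k < y (k + 1) := by
    intro hk
    refine lt_of_le_of_ne (hy.2.1 ⟨hk₁, hkn⟩ ⟨by omega, hk⟩ k.le_succ) fun h => ?_
    -- otherwise sensor `k + 1` is moved left by `lam` too, against the choice of `k`
    have hxk := hx ⟨hk₁, hkn⟩ ⟨by omega, hk⟩ k.le_succ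
    have hmove := (abs_le.1 (hy.2.2 (k + 1) ⟨by omega, hk⟩)).2
    have := hkmax (k + 1) (Finset.mem_filter.2 ⟨Finset.mem_Icc.2 ⟨by omega, hk⟩, by linarith⟩)
    simp only [id] at this
    omega
  obtain ⟨z, hz, hlt⟩ := hy.exists_stretchedCount_lt hr hlam hi hik hkn hatt hyk hslack hright
    (hy.1.left_room hy.2.1 hL hi (hik.trans hkn) hbreak hir)
  exact (hmin z hz).not_gt hlt

lemma Feasible.exists_attached_of_stretched_right (hL : 0 < L) (hr : 0 < r) (hlam : 0 < lam)
    (hx : MonotoneOn x (Set.Icc 1 n)) (hy : Feasible n L r lam x y)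
    (hmin : ∀ z, Feasible n L r lam x z → stretchedCount n lam x y ≤ stretchedCount n lam x z)
    {k₀ : ℕ} (hk₀ : k₀ ∈ Set.Icc 1 n) (hyk₀ : y k₀ = x k₀ + lam) :
    ∃ i j, 1 ≤ i ∧ i ≤ j ∧ j ≤ n ∧ Attached r y i j ∧
      ((y i = x i + lam ∧ y j = L - r) ∨ (i < j ∧ y i = x i + lam ∧ y j = x j - lam)) := by
  set x' : ℕ → ℝ := fun t => L - x (n + 1 - t)
  set y' : ℕ → ℝ := fun t => L - y (n + 1 - t)
  have hxx' : IsReflection n L x x' := fun _ _ => rfl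
  have hyy' : IsReflection n L y y' := fun _ _ => rfl
  have hmin' : ∀ z, Feasible n L r lam x' z →
      stretchedCount n lam x' y' ≤ stretchedCount n lam x' z := by
    intro z hz
    have hzz : IsReflection n L z fun t => L - z (n + 1 - t) := fun _ _ => rfl
    rw [hxx'.stretchedCount_eq hyy', ← hxx'.symm.stretchedCount_eq hzz]
    exact hmin _ (hxx'.symm.feasible hzz hz)
  obtain ⟨i, j, hi, hij, hjn, hatt, hcase⟩ :=
    (hxx'.feasible hyy' hy).exists_attached_of_stretched_left hL hr hlam (hxx'.monotoneOn hx)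
      hmin' (rev_mem_Icc hk₀) (by rw [hxx'.apply_rev hk₀, hyy'.apply_rev hk₀, hyk₀]; ring)
  refine ⟨n + 1 - j, n + 1 - i, by omega, by omega, by omega, hyy'.attached hi hjn hatt, ?_⟩
  simp only [x', y'] at hcase
  rcases hcase with ⟨h₁, h₂⟩ | ⟨hlt, h₁, h₂⟩
  · exact Or.inl ⟨by linarith, by linarith⟩
  · exact Or.inr ⟨by omega, by linarith, by linarith⟩

end Extremal

theorem stmt6_general (n : ℕ) (hn : 1 ≤ n) (L r : ℝ) (hL : 0 < L) (hr : 0 < r)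
    (x : ℕ → ℝ) (hsort : ∀ i j, 1 ≤ i → i ≤ j → j ≤ n → x i ≤ x j)
    (hlam : 0 < LamStar n L r x) :
    ∃ y : ℕ → ℝ, Covers n L r y ∧
      (∀ i j, 1 ≤ i → i ≤ j → j ≤ n → y i ≤ y j) ∧
      MaxMove n x y = LamStar n L r x ∧
      ∃ i j, 1 ≤ i ∧ i ≤ j ∧ j ≤ n ∧
        (∀ t, i ≤ t → t < j → y (t + 1) = y t + 2 * r) ∧
        ((y j = x j - LamStar n L r x ∧ y i = r) ∨
         (y i = x i + LamStar n L r x ∧ y j = L - r) ∨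
         (i < j ∧ y i = x i + LamStar n L r x ∧ y j = x j - LamStar n L r x)) := by
  have hx : MonotoneOn x (Set.Icc 1 n) := fun a ha b hb hab => hsort a b ha.1 hab hb.2
  -- if nothing covers, `LamStar` is `sInf ∅ = 0`
  have hne : ∃ y, Covers n L r y := by
    by_contra! h
    simp [LamStar, h] at hlam
  set lam := LamStar n L r x
  obtain ⟨y₀, hy₀⟩ := exists_feasible_lamStar hn hx hne
  set y := Function.argminOn (stretchedCount n lam x) {z | Feasible n L r lam x z} ⟨y₀, hy₀⟩
  have hy : Feasible n L r lam x y := Function.argminOn_mem _ {z | Feasible n L r lam x z} _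
  have hmin : ∀ z, Feasible n L r lam x z → stretchedCount n lam x y ≤ stretchedCount n lam x z :=
    fun z hz => Function.argminOn_le _ {z | Feasible n L r lam x z} hz
  have hmax : MaxMove n x y = lam :=
    le_antisymm ((maxMove_le_iff hn).2 hy.2.2) (lamStar_le_maxMove hy.1)
  refine ⟨y, hy.1, fun i j hi hij hj => hy.2.1 ⟨hi, hij.trans hj⟩ ⟨hi.trans hij, hj⟩ hij, hmax, ?_⟩
  obtain ⟨k, hk, hyk⟩ := exists_abs_sub_eq_maxMove (x := x) (y := y) hn
  rcases (abs_eq hlam.le).1 (hyk.trans hmax) with h | h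
  · obtain ⟨i, j, hi, hij, hj, hatt, hcase⟩ :=
      hy.exists_attached_of_stretched_left hL hr hlam hx hmin hk (by linarith)
    exact ⟨i, j, hi, hij, hj, hatt, hcase.imp_right Or.inr⟩
  · obtain ⟨i, j, hi, hij, hj, hatt, hcase⟩ :=
      hy.exists_attached_of_stretched_right hL hr hlam hx hmin hk (by linarith)
    exact ⟨i, j, hi, hij, hj, hatt, Or.inr hcase⟩

/-- Uniform case: if `λ* > 0`, then there is an order-preserving optimal covering placement
`y` and indices `i ≤ j` such that sensors `i, …, j` are in attached positions
(`y (t+1) = y t + 2r` for `i ≤ t < j`) and one of three cases holds: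
(a) `y j = x j - λ*` and `y i = r`; (b) `y i = x i + λ*` and `y j = L - r`;
(c) `i < j`, `y i = x i + λ*` and `y j = x j - λ*`. -/
theorem stmt6 (n : ℕ) (hn : 1 ≤ n) (L r : ℝ) (hL : 0 < L) (hr : 0 < r)
    (x : ℕ → ℝ) (hsort : ∀ i j, 1 ≤ i → i ≤ j → j ≤ n → x i ≤ x j)
    (hcap : L ≤ 2 * n * r)
    (hlam : 0 < LamStar n L r x) :
    ∃ y : ℕ → ℝ, Covers n L r y ∧
      (∀ i j, 1 ≤ i → i ≤ j → j ≤ n → y i ≤ y j) ∧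
      MaxMove n x y = LamStar n L r x ∧
      ∃ i j, 1 ≤ i ∧ i ≤ j ∧ j ≤ n ∧
        (∀ t, i ≤ t → t < j → y (t + 1) = y t + 2 * r) ∧
        ((y j = x j - LamStar n L r x ∧ y i = r) ∨
         (y i = x i + LamStar n L r x ∧ y j = L - r) ∨
         (i < j ∧ y i = x i + LamStar n L r x ∧ y j = x j - LamStar n L r x)) :=
  stmt6_general n hn L r hL hr x hsort hlam
end

section
/- In the simple cycle barrier coverage problem, if λ* > 0, then there exist a covering placement of the cycle with maximum movement equal to λ*, indices i, j with 1 ≤ i ≤ n and i < j < i + n, and real lifts y_i, y_{i+1}, …, y_j with y_{t+1} = y_t + 2r for i ≤ t ≤ j−1 (the sensors are in attached positions), y_i = x_i + λ* (sensor i is moved clockwise by λ*), and y_j = x_j − λ* (sensor j is moved counterclockwise by λ*), such that in this placement, for each i ≤ t ≤ j, the sensor with index ((t−1) mod n) + 1 is placed at the cycle point represented by y_t. -/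
/-- Cycle case: the placement `y` of sensors `1, …, n` (points of the cycle `ℝ/Lℤ`),
all with range `r`, covers the whole cycle. -/
def CycCovers (n : ℕ) (L r : ℝ) (y : ℕ → AddCircle L) : Prop :=
  ∀ p : AddCircle L, ∃ i, 1 ≤ i ∧ i ≤ n ∧ dist p (y i) ≤ r

/-- The maximum movement of the placement `y`: the largest cycle-distance between a
sensor's initial point (represented by the real coordinate `x i`) and its placed point. -/
noncomputable def CycMaxMove (n : ℕ) (L : ℝ) (x : ℕ → ℝ) (y : ℕ → AddCircle L) : ℝ :=
  sSup ((fun i => dist ((x i : AddCircle L)) (y i)) '' Set.Icc 1 n)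

/-- `λ*` for the cycle: the infimum of the maximum movement over all covering placements. -/
noncomputable def CycLamStar (n : ℕ) (L r : ℝ) (x : ℕ → ℝ) : ℝ :=
  sInf (CycMaxMove n L x '' {y : ℕ → AddCircle L | CycCovers n L r y})

/-!
Write `λ(a, b) = (x_b - x_a - 2r (b - a)) / 2` for indices `a < b < a + n` of the doubled
coordinate list, and let `(i, j)` maximise it, with value `μ`.

If a covering placement moved every sensor by at most `m < λ(i, j)`, the arc from
`x_i + m + r` to `x_j - m - r` would contain `j - i` points pairwise more than `2r` apart,
unreachable by the sensors outside `(i, j)`; each would need its own sensor among the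
`j - i - 1` strictly between. Hence `μ ≤ λ*`.

Conversely, put sensor `i` at `x_i + μ` and each following sensor `i + s` at the minimum of
`x_{i+s} + μ` and `2r` past its predecessor. Maximality of `(i, j)` gives that no sensor moves
more than `μ`, that sensors `i, …, j` end up attached at `x_i + μ + 2r (t - i)`, and that the
gap closing the cycle is at most `2r`. So `λ* ≤ μ`, and as `λ* > 0` this placement is optimal.
-/

namespace AddCircle

variable {L : ℝ}

lemma dist_coe_le_abs_sub (a b : ℝ) : dist (a : AddCircle L) b ≤ |a - b| := by
  rw [dist_eq_norm, ← coe_sub]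
  exact QuotientAddGroup.norm_mk_le_norm

lemma abs_sub_le_of_dist_coe_le {a b c : ℝ} (h : dist (a : AddCircle L) b ≤ c)
    (hab : |a - b| + c < L) : |a - b| ≤ c := by
  rw [dist_eq_norm, ← coe_sub, norm_eq] at h
  set z := round (L⁻¹ * (a - b))
  rcases eq_or_ne z 0 with hz | hz
  · simpa [hz] using h
  have hc : 0 ≤ c := (abs_nonneg _).trans h
  have hz1 : (1 : ℝ) ≤ |(z : ℝ)| := by exact_mod_cast Int.one_le_abs hz
  have hL : 0 < L := by linarith [abs_nonneg (a - b)]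
  have hzL : L ≤ |(z : ℝ) * L| := by
    rw [abs_mul, abs_of_pos hL]
    nlinarith
  have := abs_sub_abs_le_abs_sub ((z : ℝ) * L) (a - b)
  rw [abs_sub_comm ((z : ℝ) * L)] at this
  linarith

lemma lt_dist_coe_of_lt_abs_sub {a b c : ℝ} (hc : c < |a - b|) (hab : |a - b| + c < L) :
    c < dist (a : AddCircle L) b :=
  lt_of_not_ge fun h => (abs_sub_le_of_dist_coe_le h hab).not_gt hc

end AddCircle

noncomputable def greedyChain (c : ℕ → ℝ) (d : ℝ) : ℕ → ℝ
  | 0 => c 0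
  | m + 1 => min (c (m + 1)) (greedyChain c d m + d)

lemma le_greedyChain_iff {c : ℕ → ℝ} {d q : ℝ} {m : ℕ} :
    q ≤ greedyChain c d m ↔ ∀ s ≤ m, q ≤ c s + d * ((m : ℝ) - s) := by
  induction m generalizing q with
  | zero => simp [greedyChain]
  | succ m ih =>
    have hstep :
        q ≤ greedyChain c d m + d ↔ ∀ s ≤ m, q ≤ c s + d * ((↑(m + 1) : ℝ) - s) := by
      rw [← sub_le_iff_le_add, ih]
      refine forall₂_congr fun s _ => ?_
      push_cast
      constructor <;> intro h <;> linarith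
    rw [greedyChain, le_min_iff, hstep]
    refine ⟨fun ⟨hlast, hrest⟩ s hs => ?_, fun h => ⟨by simpa using h (m + 1) le_rfl,
      fun s hs => h s (hs.trans m.le_succ)⟩⟩
    rcases Nat.le_succ_iff.1 hs with hs | rfl
    · exact hrest s hs
    · simpa using hlast

lemma greedyChain_le_add {c : ℕ → ℝ} {d : ℝ} {s m : ℕ} (hs : s ≤ m) :
    greedyChain c d m ≤ c s + d * ((m : ℝ) - s) :=
  le_greedyChain_iff.1 le_rfl s hs

lemma greedyChain_succ_le (c : ℕ → ℝ) (d : ℝ) (m : ℕ) :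
    greedyChain c d (m + 1) ≤ greedyChain c d m + d :=
  min_le_right _ _

lemma exists_abs_sub_le_of_succ_le (P : ℕ → ℝ) {r z : ℝ} {b : ℕ}
    (hgap : ∀ t < b, P (t + 1) ≤ P t + 2 * r) (hlo : P 0 - r ≤ z) (hhi : z ≤ P b + r) :
    ∃ t ≤ b, |z - P t| ≤ r := by
  induction b with
  | zero => exact ⟨0, le_rfl, abs_le.2 ⟨by linarith, by linarith⟩⟩
  | succ b ih =>
    by_cases hz : z ≤ P b + r
    · obtain ⟨t, htb, ht⟩ := ih (fun t ht => hgap t (by omega)) hz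
      exact ⟨t, by omega, ht⟩
    · have := hgap b (by omega)
      exact ⟨b + 1, le_rfl, abs_le.2 ⟨by linarith, by linarith⟩⟩

lemma exists_separated_points {u v r : ℝ} (hr : 0 ≤ r) {N : ℕ}
    (h : 2 * r * ((N : ℝ) - 1) < v - u) :
    ∃ p : ℕ → ℝ, (∀ s < N, u < p s ∧ p s < v) ∧ ∀ s s', s < s' → 2 * r < p s' - p s := by
  set ε := (v - u - 2 * r * ((N : ℝ) - 1)) / (N + 1)
  have hε : 0 < ε := div_pos (by linarith) (by positivity)
  have hNε : ((N : ℝ) + 1) * ε = v - u - 2 * r * ((N : ℝ) - 1) := by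
    simp only [ε]; field_simp
  refine ⟨fun s => u + ε + s * (2 * r + ε), fun s hs => ⟨?_, ?_⟩, fun s s' hss' => ?_⟩
  · have : 0 ≤ (s : ℝ) * (2 * r + ε) := by positivity
    linarith
  · have hs' : (s : ℝ) ≤ N - 1 := by
      have : (s : ℝ) + 1 ≤ N := by exact_mod_cast hs
      linarith
    nlinarith
  · have : (s : ℝ) + 1 ≤ s' := by exact_mod_cast hss'
    nlinarith

/-- The index in `[i, i + n)` that stands for sensor `k ∈ [1, n]` in the doubled list of
sensors `1, …, 2n` (where `k + n` is the copy of `k` shifted by one turn). -/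
def liftIdx (n i k : ℕ) : ℕ := if i ≤ k then k else k + n

section liftIdx

variable {n i : ℕ}

lemma liftIdx_mem {k : ℕ} (hi : 1 ≤ i) (hin : i ≤ n) (hk : k ≤ n) :
    i ≤ liftIdx n i k ∧ liftIdx n i k < i + n := by
  unfold liftIdx; split_ifs <;> omega

lemma liftIdx_injOn : Set.InjOn (liftIdx n i) (Set.Icc 1 n) := by
  intro k hk k' hk' h
  simp only [Set.mem_Icc] at hk hk'
  unfold liftIdx at h; split_ifs at h <;> omega

lemma liftIdx_mod_add_one {t : ℕ} (hi : 1 ≤ i) (hin : i ≤ n) (hit : i ≤ t)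
    (hti : t < i + n) :
    liftIdx n i ((t - 1) % n + 1) = t := by
  unfold liftIdx
  rcases le_or_gt t n with htn | htn
  · rw [Nat.mod_eq_of_lt (by omega)]; split_ifs <;> omega
  · rw [Nat.mod_eq_sub_mod (by omega), Nat.mod_eq_of_lt (by omega)]; split_ifs <;> omega

end liftIdx

/-- The coordinates extended to all indices by `t + n ↦ x_t + L`. The theorem's `xe` is only
pinned down on `[1, 2n]`, while the wrap-around argument compares pairs beyond `2n`. -/
noncomputable def cycCoord (n : ℕ) (L : ℝ) (x : ℕ → ℝ) (t : ℕ) : ℝ :=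
  x ((t - 1) % n + 1) + ((t - 1) / n : ℕ) * L

section cycCoord

variable {n : ℕ} {L : ℝ} {x : ℕ → ℝ}

lemma cycCoord_of_le {t : ℕ} (h1 : 1 ≤ t) (h2 : t ≤ n) : cycCoord n L x t = x t := by
  have h : t - 1 < n := by omega
  simp [cycCoord, Nat.mod_eq_of_lt h, Nat.div_eq_of_lt h, Nat.sub_add_cancel h1]

lemma cycCoord_add_period (hn : 0 < n) {t : ℕ} (ht : 1 ≤ t) :
    cycCoord n L x (t + n) = cycCoord n L x t + L := by
  have h : t + n - 1 = t - 1 + n := by omega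
  simp only [cycCoord, h, Nat.add_mod_right, Nat.add_div_right _ hn]
  push_cast; ring

lemma coe_cycCoord_liftIdx (hn : 0 < n) {i k : ℕ} (hk1 : 1 ≤ k) (hkn : k ≤ n) :
    (cycCoord n L x (liftIdx n i k) : AddCircle L) = x k := by
  unfold liftIdx
  split_ifs
  · rw [cycCoord_of_le hk1 hkn]
  · rw [cycCoord_add_period hn hk1, cycCoord_of_le hk1 hkn, AddCircle.coe_add_period]

lemma cycCoord_le_succ (hn : 0 < n)
    (hsort : ∀ a b, 1 ≤ a → a ≤ b → b ≤ n → x a ≤ x b) (hx : x n ≤ x 1 + L) (t : ℕ)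
    (ht : 1 ≤ t) :
    cycCoord n L x t ≤ cycCoord n L x (t + 1) := by
  induction t using Nat.strong_induction_on with
  | _ t ih =>
    rcases lt_trichotomy t n with htn | htn | htn
    · rw [cycCoord_of_le ht htn.le, cycCoord_of_le (by omega) htn]
      exact hsort t (t + 1) ht (by omega) htn
    · rw [htn, add_comm n 1, cycCoord_add_period hn le_rfl, cycCoord_of_le le_rfl hn,
        cycCoord_of_le hn le_rfl]
      exact hx
    · obtain ⟨s, rfl⟩ : ∃ s, t = s + n := ⟨t - n, by omega⟩
      rw [add_right_comm, cycCoord_add_period hn (by omega), cycCoord_add_period hn (by omega)]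
      linarith [ih s (by omega) (by omega)]

lemma cycCoord_mono (hn : 0 < n) (hsort : ∀ a b, 1 ≤ a → a ≤ b → b ≤ n → x a ≤ x b)
    (hx : x n ≤ x 1 + L) {a b : ℕ} (ha : 1 ≤ a) (hab : a ≤ b) :
    cycCoord n L x a ≤ cycCoord n L x b := by
  induction b, hab using Nat.le_induction with
  | base => exact le_rfl
  | succ b hab ih => exact ih.trans (cycCoord_le_succ hn hsort hx b (ha.trans hab))

lemma eq_cycCoord {xe : ℕ → ℝ} (hn : 0 < n) (hxe : ∀ k, 1 ≤ k → k ≤ n → xe k = x k)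
    (hxe' : ∀ k, 1 ≤ k → k ≤ n → xe (k + n) = x k + L) {t : ℕ} (h1 : 1 ≤ t)
    (h2 : t ≤ 2 * n) :
    xe t = cycCoord n L x t := by
  rcases le_or_gt t n with htn | htn
  · rw [hxe t h1 htn, cycCoord_of_le h1 htn]
  · obtain ⟨s, rfl⟩ : ∃ s, t = s + n := ⟨t - n, by omega⟩
    rw [hxe' s (by omega) (by omega), cycCoord_add_period hn (by omega),
      cycCoord_of_le (by omega) (by omega)]

end cycCoord

noncomputable def forcedMove (r : ℝ) (X : ℕ → ℝ) (a b : ℕ) : ℝ :=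
  (X b - X a) / 2 - r * ((b : ℝ) - a)

def IsMaxForcedPair (n : ℕ) (r : ℝ) (X : ℕ → ℝ) (i j : ℕ) : Prop :=
  ∀ a b, 1 ≤ a → a < b → b < a + n → forcedMove r X a b ≤ forcedMove r X i j

section forcedMove

variable {n : ℕ} {L r : ℝ} {X : ℕ → ℝ}

lemma forcedMove_add (a b c : ℕ) :
    forcedMove r X a b + forcedMove r X b c = forcedMove r X a c := by
  unfold forcedMove; ring

lemma forcedMove_add_period {a b : ℕ} (ha : X (a + n) = X a + L) (hb : X (b + n) = X b + L) :
    forcedMove r X (a + n) (b + n) = forcedMove r X a b := by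
  unfold forcedMove; rw [ha, hb]; push_cast; ring

lemma forcedMove_add_period_nonpos (hcap : L ≤ 2 * n * r) {a : ℕ} (ha : X (a + n) = X a + L) :
    forcedMove r X a (a + n) ≤ 0 := by
  unfold forcedMove; rw [ha]; push_cast; linarith

lemma exists_isMaxForcedPair (hn : 2 ≤ n) (hper : ∀ t, 1 ≤ t → X (t + n) = X t + L) :
    ∃ i j, 1 ≤ i ∧ i ≤ n ∧ i < j ∧ j < i + n ∧ IsMaxForcedPair n r X i j := by
  obtain ⟨⟨i, d⟩, hmem, hmax⟩ := (Finset.Icc 1 n ×ˢ Finset.Ioo 0 n).exists_max_image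
    (fun p => forcedMove r X p.1 (p.1 + p.2)) ⟨(1, 1), by simp; omega⟩
  simp only [Finset.mem_product, Finset.mem_Icc, Finset.mem_Ioo] at hmem
  refine ⟨i, i + d, hmem.1.1, hmem.1.2, by omega, by omega, fun a b ha hab hba => ?_⟩
  obtain ⟨d', rfl⟩ : ∃ d', b = a + d' := ⟨b - a, by omega⟩
  induction a using Nat.strong_induction_on with
  | _ a ih =>
    rcases le_or_gt a n with han | han
    · exact hmax (a, d') (by simp; omega)
    · obtain ⟨a', rfl⟩ : ∃ a', a = a' + n := ⟨a - n, by omega⟩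
      rw [add_right_comm, forcedMove_add_period (hper a' (by omega)) (hper (a' + d') (by omega))]
      exact ih a' (by omega) (by omega) (by omega) (by omega)

variable {i j : ℕ}

lemma IsMaxForcedPair.forcedMove_nonneg (hmax : IsMaxForcedPair n r X i j)
    (hμ : 0 ≤ forcedMove r X i j) (hi : 1 ≤ i) (hji : j < i + n) {a : ℕ} (hia : i ≤ a)
    (haj : a ≤ j) : 0 ≤ forcedMove r X i a := by
  rcases haj.eq_or_lt with rfl | haj
  · exact hμ
  · linarith [hmax a j (by omega) haj (by omega), forcedMove_add (r := r) (X := X) i a j]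

lemma IsMaxForcedPair.forcedMove_to_add_period_nonpos (hmax : IsMaxForcedPair n r X i j)
    (hcap : L ≤ 2 * n * r) (hper : ∀ t, 1 ≤ t → X (t + n) = X t + L) (hi : 1 ≤ i)
    (hij : i < j) (hji : j < i + n) {a : ℕ} (hia : i ≤ a) (hai : a < i + n) :
    forcedMove r X a (i + n) ≤ 0 := by
  have hcyc : forcedMove r X i (i + n) ≤ 0 := forcedMove_add_period_nonpos hcap (hper i hi)
  rcases hia.eq_or_lt with rfl | hia
  · exact hcyc
  by_cases hμ : forcedMove r X i j ≤ 0
  · exact (hmax a (i + n) (by omega) (by omega) (by omega)).trans hμ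
  rcases le_or_gt a j with haj | haj
  · linarith [hmax.forcedMove_nonneg (by linarith) hi hji hia.le haj,
      forcedMove_add (r := r) (X := X) i a (i + n)]
  · have h := hmax a (j + n) (by omega) (by omega) (by omega)
    rw [← forcedMove_add_period (hper i hi) (hper j (by omega))] at h
    linarith [forcedMove_add (r := r) (X := X) a (i + n) (j + n)]

end forcedMove

section movement

variable {n : ℕ} {L r : ℝ} {x : ℕ → ℝ} {y : ℕ → AddCircle L}

lemma dist_le_cycMaxMove {k : ℕ} (hk1 : 1 ≤ k) (hkn : k ≤ n) :
    dist (x k : AddCircle L) (y k) ≤ CycMaxMove n L x y :=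
  le_csSup ((Set.finite_Icc 1 n).image _).bddAbove ⟨k, ⟨hk1, hkn⟩, rfl⟩

lemma cycMaxMove_nonneg : 0 ≤ CycMaxMove n L x y :=
  Real.sSup_nonneg (by rintro _ ⟨k, -, rfl⟩; exact dist_nonneg)

lemma cycMaxMove_le (hn : 1 ≤ n) {m : ℝ}
    (h : ∀ k, 1 ≤ k → k ≤ n → dist (x k : AddCircle L) (y k) ≤ m) :
    CycMaxMove n L x y ≤ m :=
  csSup_le ⟨_, 1, ⟨le_rfl, hn⟩, rfl⟩ (by rintro _ ⟨k, hk, rfl⟩; exact h k hk.1 hk.2)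

lemma cycLamStar_le (hy : CycCovers n L r y) : CycLamStar n L r x ≤ CycMaxMove n L x y :=
  csInf_le ⟨0, by rintro _ ⟨y, -, rfl⟩; exact cycMaxMove_nonneg⟩ ⟨y, hy, rfl⟩

lemma le_cycLamStar (hy : CycCovers n L r y) {m : ℝ}
    (h : ∀ y, CycCovers n L r y → m ≤ CycMaxMove n L x y) : m ≤ CycLamStar n L r x :=
  le_csInf ⟨_, y, hy, rfl⟩ (by rintro _ ⟨y, hy, rfl⟩; exact h y hy)

end movement

section lowerBound

variable {n : ℕ} {L r : ℝ} {x : ℕ → ℝ} {i j : ℕ}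

lemma liftIdx_mem_Ioo_of_dist_le (hn : 0 < n)
    (hmono : ∀ a b, 1 ≤ a → a ≤ b → cycCoord n L x a ≤ cycCoord n L x b)
    (hi : 1 ≤ i) (hin : i ≤ n) (hij : i < j) (hji : j < i + n) {c p : ℝ}
    (hp1 : cycCoord n L x i + c < p) (hp2 : p < cycCoord n L x j - c) {k : ℕ} (hk1 : 1 ≤ k)
    (hkn : k ≤ n) (hd : dist (p : AddCircle L) (x k) ≤ c) :
    i < liftIdx n i k ∧ liftIdx n i k < j := by
  set X := cycCoord n L x
  set t := liftIdx n i k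
  obtain ⟨hit, hti⟩ := liftIdx_mem hi hin hkn
  have hper : X (i + n) = X i + L := cycCoord_add_period hn hi
  have hXt := hmono t (i + n) (by omega) hti.le
  have hXj := hmono j (i + n) (by omega) hji.le
  rw [← coe_cycCoord_liftIdx hn hk1 hkn (i := i)] at hd
  have habs := AddCircle.abs_sub_le_of_dist_coe_le hd (by
    have := hmono i t hi hit
    rw [← lt_sub_iff_add_lt, abs_lt]; constructor <;> linarith)
  rw [abs_le] at habs
  constructor
  · by_contra! h; linarith [hmono t i (by omega) h]
  · by_contra! h; linarith [hmono j t (by omega) h]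

theorem forcedMove_le_cycMaxMove (hn : 0 < n) (hr : 0 ≤ r)
    (hmono : ∀ a b, 1 ≤ a → a ≤ b → cycCoord n L x a ≤ cycCoord n L x b)
    (hi : 1 ≤ i) (hin : i ≤ n) (hij : i < j) (hji : j < i + n) {y : ℕ → AddCircle L}
    (hy : CycCovers n L r y) : forcedMove r (cycCoord n L x) i j ≤ CycMaxMove n L x y := by
  set X := cycCoord n L x
  set m := CycMaxMove n L x y
  have hm : 0 ≤ m := cycMaxMove_nonneg
  by_contra! hlt
  have hXji : X j ≤ X i + L := cycCoord_add_period hn hi ▸ hmono j (i + n) (by omega) hji.le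
  obtain ⟨p, hp, hsep⟩ := exists_separated_points (u := X i + (m + r)) (v := X j - (m + r))
    (N := j - i) hr (by unfold forcedMove at hlt; rw [Nat.cast_sub hij.le]; linarith)
  choose k hk1 hkn hkd using fun s => hy (p s)
  have hd : ∀ s, dist (p s : AddCircle L) (x (k s)) ≤ m + r := fun s => by
    linarith [dist_triangle (p s : AddCircle L) (y (k s)) (x (k s)), hkd s,
      dist_comm (x (k s) : AddCircle L) (y (k s)) ▸ dist_le_cycMaxMove (hk1 s) (hkn s)]
  have hsame : ∀ s s', s < s' → s' < j - i → k s ≠ k s' := by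
    intro s s' hss' hs' hk
    have hks := hkd s
    rw [hk, dist_comm] at hks
    have h2r : 2 * r < dist (p s' : AddCircle L) (p s) := by
      have hgap := hsep s s' hss'
      refine AddCircle.lt_dist_coe_of_lt_abs_sub (by rwa [abs_of_pos (by linarith)]) ?_
      rw [abs_of_pos (by linarith)]
      linarith [(hp s' hs').2, (hp s (hss'.trans hs')).1]
    linarith [dist_triangle (p s' : AddCircle L) (y (k s')) (p s), hkd s']
  have hinj : Set.InjOn (fun s => liftIdx n i (k s)) (Finset.range (j - i)) := by
    intro s hs s' hs' h
    rw [Finset.coe_range, Set.mem_Iio] at hs hs'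
    have hk := liftIdx_injOn ⟨hk1 s, hkn s⟩ ⟨hk1 s', hkn s'⟩ h
    by_contra hne
    rcases Nat.lt_or_gt_of_ne hne with hss' | hss'
    · exact hsame s s' hss' hs' hk
    · exact hsame s' s hss' hs hk.symm
  have hmaps : Set.MapsTo (fun s => liftIdx n i (k s)) (Finset.range (j - i)) (Finset.Ioo i j) :=
    fun s hs => by
      rw [Finset.coe_range, Set.mem_Iio] at hs
      exact Finset.mem_Ioo.2 (liftIdx_mem_Ioo_of_dist_le hn hmono hi hin hij hji (hp s hs).1
        (hp s hs).2 (hk1 s) (hkn s) (hd s))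
  have := Finset.card_le_card_of_injOn _ hmaps hinj
  simp only [Finset.card_range, Nat.card_Ioo] at this
  omega

end lowerBound

noncomputable def greedyPlacement (n : ℕ) (L r : ℝ) (X : ℕ → ℝ) (lam : ℝ) (i k : ℕ) :
    AddCircle L :=
  (greedyChain (fun s => X (i + s) + lam) (2 * r) (liftIdx n i k - i) : ℝ)

section upperBound

variable {n : ℕ} {L r lam : ℝ} {X : ℕ → ℝ} {i j : ℕ}

lemma greedyChain_eq_of_forcedMove_nonneg {m : ℕ}
    (h : ∀ s ≤ m, 0 ≤ forcedMove r X i (i + s)) :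
    greedyChain (fun s => X (i + s) + lam) (2 * r) m = X i + lam + 2 * r * m := by
  refine le_antisymm ?_ (le_greedyChain_iff.2 fun s hs => ?_)
  · have := greedyChain_le_add (c := fun s => X (i + s) + lam) (d := 2 * r) (Nat.zero_le m)
    simpa only [add_zero, Nat.cast_zero, sub_zero] using this
  have := h s hs
  unfold forcedMove at this
  push_cast at this
  linarith

lemma greedyPlacement_mod_add_one (hi : 1 ≤ i) (hin : i ≤ n) {t : ℕ} (hit : i ≤ t)
    (hti : t < i + n) :
    greedyPlacement n L r X lam i ((t - 1) % n + 1) =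
      (greedyChain (fun s => X (i + s) + lam) (2 * r) (t - i) : ℝ) := by
  rw [greedyPlacement, liftIdx_mod_add_one hi hin hit hti]

lemma IsMaxForcedPair.greedyPlacement_eq_attached (hmax : IsMaxForcedPair n r X i j)
    (hμ : 0 ≤ forcedMove r X i j) (hi : 1 ≤ i) (hin : i ≤ n) (hji : j < i + n) {t : ℕ}
    (hit : i ≤ t) (htj : t ≤ j) :
    greedyPlacement n L r X (forcedMove r X i j) i ((t - 1) % n + 1) =
      ((X i + forcedMove r X i j + 2 * r * ((t : ℝ) - i) : ℝ) : AddCircle L) := by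
  rw [greedyPlacement_mod_add_one hi hin hit (by omega),
    greedyChain_eq_of_forcedMove_nonneg fun s hs =>
      hmax.forcedMove_nonneg hμ hi hji (by omega) (by omega),
    Nat.cast_sub hit]

theorem greedyPlacement_cycCovers (hL : 0 < L) (hi : 1 ≤ i) (hin : i ≤ n)
    (hper : X (i + n) = X i + L)
    (hwrap : ∀ a, i ≤ a → a < i + n → forcedMove r X a (i + n) ≤ 0) :
    CycCovers n L r (greedyPlacement n L r X lam i) := by
  set Q := greedyChain (fun s => X (i + s) + lam) (2 * r)
  have hQwrap : Q 0 + L - r ≤ Q (n - 1) + r := by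
    have hQ0 : Q 0 = X i + lam := by simp [Q, greedyChain]
    rw [hQ0, ← sub_le_iff_le_add]
    refine le_greedyChain_iff.2 fun s hs => ?_
    have := hwrap (i + s) (by omega) (by omega)
    unfold forcedMove at this
    rw [hper] at this
    rw [Nat.cast_sub (by omega)]
    push_cast at this ⊢
    linarith
  intro p
  have := Fact.mk hL
  set z : ℝ := (AddCircle.equivIco L (Q 0 - r) p : ℝ)
  have hz := (AddCircle.equivIco L (Q 0 - r) p).2
  obtain ⟨s, hs, hzs⟩ := exists_abs_sub_le_of_succ_le Q (b := n - 1)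
    (fun t _ => greedyChain_succ_le _ _ t) hz.1 (by linarith [hz.2])
  have hk : (i + s - 1) % n + 1 ≤ n := Nat.mod_lt _ (by omega)
  refine ⟨(i + s - 1) % n + 1, by omega, hk, ?_⟩
  rw [greedyPlacement_mod_add_one hi hin (by omega) (by omega), Nat.add_sub_cancel_left,
    ← AddCircle.coe_equivIco (y := p) (a := Q 0 - r)]
  exact (AddCircle.dist_coe_le_abs_sub _ _).trans hzs

lemma dist_greedyPlacement_le {x : ℕ → ℝ} (hn : 0 < n) (hi : 1 ≤ i) (hin : i ≤ n)
    (hlam : 0 ≤ lam)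
    (hadm : ∀ a b, i ≤ a → a < b → b < i + n → forcedMove r (cycCoord n L x) a b ≤ lam)
    {k : ℕ} (hk1 : 1 ≤ k) (hkn : k ≤ n) :
    dist (x k : AddCircle L) (greedyPlacement n L r (cycCoord n L x) lam i k) ≤ lam := by
  set X := cycCoord n L x
  obtain ⟨hit, hti⟩ := liftIdx_mem (k := k) hi hin hkn
  set t := liftIdx n i k
  set Q := greedyChain (fun s => X (i + s) + lam) (2 * r)
  rw [greedyPlacement, ← coe_cycCoord_liftIdx hn hk1 hkn (i := i)]
  refine (AddCircle.dist_coe_le_abs_sub _ _).trans (abs_sub_le_iff.2 ⟨?_, ?_⟩)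
  · have : X t - lam ≤ Q (t - i) := by
      refine le_greedyChain_iff.2 fun s hs => ?_
      have h : forcedMove r X (i + s) t ≤ lam := by
        rcases hs.eq_or_lt with rfl | hs
        · rw [Nat.add_sub_cancel' hit]; simpa [forcedMove] using hlam
        · exact hadm _ _ (by omega) (by omega) hti
      unfold forcedMove at h
      rw [Nat.cast_sub hit]
      push_cast at h ⊢
      linarith
    linarith
  · have := greedyChain_le_add (c := fun s => X (i + s) + lam) (d := 2 * r) (le_refl (t - i))
    rw [Nat.add_sub_cancel' hit, sub_self, mul_zero, add_zero] at this
    linarith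

end upperBound

/-- Simple cycle barrier coverage: if `λ* > 0`, then there exist a covering placement with
maximum movement `λ*`, indices `i, j` with `1 ≤ i ≤ n` and `i < j < i + n`, and real lifts
`w i, …, w j` in attached positions (`w (t+1) = w t + 2r`), with `w i = xe i + λ*`
(sensor `i` moved clockwise by `λ*`) and `w j = xe j − λ*` (sensor `j` moved
counterclockwise by `λ*`), such that for `i ≤ t ≤ j` the sensor with index
`((t−1) mod n) + 1` is placed at the cycle point represented by `w t`. Here `xe` extends
the coordinates by `xe (k+n) = x k + L`. -/
theorem stmt16 (n : ℕ) (hn : 1 ≤ n) (L r : ℝ) (hr : 0 < r) (h2r : 2 * r < L)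
    (hcap : L ≤ 2 * n * r)
    (x : ℕ → ℝ) (hx0 : 0 < x 1) (hxL : x n < L)
    (hsort : ∀ i j, 1 ≤ i → i ≤ j → j ≤ n → x i ≤ x j)
    (xe : ℕ → ℝ)
    (hxe : ∀ k, 1 ≤ k → k ≤ n → xe k = x k)
    (hxe' : ∀ k, 1 ≤ k → k ≤ n → xe (k + n) = x k + L)
    (hlam : 0 < CycLamStar n L r x) :
    ∃ (y : ℕ → AddCircle L) (i j : ℕ) (w : ℕ → ℝ),
      CycCovers n L r y ∧
      CycMaxMove n L x y = CycLamStar n L r x ∧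
      1 ≤ i ∧ i ≤ n ∧ i < j ∧ j < i + n ∧
      (∀ t, i ≤ t → t < j → w (t + 1) = w t + 2 * r) ∧
      w i = xe i + CycLamStar n L r x ∧
      w j = xe j - CycLamStar n L r x ∧
      (∀ t, i ≤ t → t ≤ j → y ((t - 1) % n + 1) = ((w t : ℝ) : AddCircle L)) := by
  have hL : 0 < L := by linarith
  have hn2 : 2 ≤ n := by exact_mod_cast (show (1 : ℝ) < n by nlinarith)
  set X := cycCoord n L x
  have hper : ∀ t, 1 ≤ t → X (t + n) = X t + L := fun t => cycCoord_add_period (by omega)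
  have hmono : ∀ a b, 1 ≤ a → a ≤ b → X a ≤ X b := fun a b =>
    cycCoord_mono (by omega) hsort (by linarith)
  obtain ⟨i, j, hi, hin, hij, hji, hmax⟩ := exists_isMaxForcedPair (r := r) hn2 hper
  set μ := forcedMove r X i j
  have hcov : ∀ lam, CycCovers n L r (greedyPlacement n L r X lam i) := fun lam =>
    greedyPlacement_cycCovers hL hi hin (hper i hi) fun a =>
      hmax.forcedMove_to_add_period_nonpos hcap hper hi hij hji
  have hmove : ∀ lam, μ ≤ lam → 0 ≤ lam →
      CycMaxMove n L x (greedyPlacement n L r X lam i) ≤ lam :=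
    fun lam hμ h0 => cycMaxMove_le hn fun k => dist_greedyPlacement_le (by omega) hi hin h0
      fun a b ha hab hb => (hmax a b (by omega) hab (by omega)).trans hμ
  have hμ : 0 < μ := by
    by_contra! h
    linarith [cycLamStar_le (x := x) (hcov 0), hmove 0 h le_rfl]
  have hstar : CycLamStar n L r x = μ :=
    le_antisymm ((cycLamStar_le (hcov μ)).trans (hmove μ le_rfl hμ.le))
      (le_cycLamStar (hcov μ) fun y hy =>
        forcedMove_le_cycMaxMove (by omega) hr.le hmono hi hin hij hji hy)
  have hxi : xe i = X i := eq_cycCoord (by omega) hxe hxe' hi (by omega)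
  have hxj : xe j = X j := eq_cycCoord (by omega) hxe hxe' (by omega) (by omega)
  refine ⟨greedyPlacement n L r X μ i, i, j, fun t => X i + μ + 2 * r * ((t : ℝ) - i), hcov μ,
    le_antisymm ((hmove μ le_rfl hμ.le).trans hstar.ge) (cycLamStar_le (hcov μ)),
    hi, hin, hij, hji, fun t _ _ => by push_cast; ring, by rw [hstar, hxi]; ring,
    by rw [hstar, hxj]; simp only [μ, forcedMove]; ring,
    fun t hit htj => hmax.greedyPlacement_eq_attached hμ.le hi hin hji hit htj⟩
end
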